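/- Conversely, if a binary phylogenetic tree τ satisfies min(x_1+x_2, x_3+x_4) ≤ min{min(x_1+x_3, x_2+x_4), min(x_1+x_4, x_2+x_3)} for every inner edge (with X_1, X_2, X_3, X_4 the four parts as above), then τ is an NNI-local minimum of Φ_f for every strictly increasing f : {2,...,⌊n/2⌋} → ℝ≥0. -/

import Mathlib

open SimpleGraph

/-- An (unrooted) phylogenetic tree on `n` leaves with vertex type `V`:
a tree whose degree-one vertices are exactly the images of the `n` leaf labels. -/
structure PhyloTree (n : ℕ) (V : Type) [Fintype V] where
  G : SimpleGraph V
  isTree : G.IsTree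
  leaf : Fin n → V
  leaf_inj : Function.Injective leaf
  leaf_iff : ∀ v : V, (G.neighborSet v).ncard = 1 ↔ ∃ i, leaf i = v

variable {n : ℕ} {V : Type} [Fintype V]

/-- Number of leaves on the `u`-side after deleting the edge `{u,v}`. -/
noncomputable def splitSide (G : SimpleGraph V) (leaf : Fin n → V) (u v : V) : ℕ :=
  {i : Fin n | (G.deleteEdges {s(u, v)}).Reachable (leaf i) u}.ncard

/-- The size `‖σ‖ = min(|A|,|B|)` of the split induced by an edge. -/
noncomputable def splitSizeE (T : PhyloTree n V) : Sym2 V → ℕ :=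
  Sym2.lift ⟨fun u v => min (splitSide T.G T.leaf u v) (splitSide T.G T.leaf v u),
    fun _ _ => min_comm _ _⟩

/-- `Φ_f(τ) = ∑_{σ ∈ Σ*(τ)} f(‖σ‖)`, the sum over non-trivial splits (inner edges). -/
noncomputable def Phi (T : PhyloTree n V) (f : ℕ → ℝ) : ℝ :=
  ∑ᶠ e ∈ {e : Sym2 V | e ∈ T.G.edgeSet ∧ 2 ≤ splitSizeE T e}, f (splitSizeE T e)

/-- `m(τ)_j = |{σ ∈ Σ*(τ) : ‖σ‖ ≤ j}|`. -/
noncomputable def mseq (T : PhyloTree n V) (j : ℕ) : ℕ :=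
  {e : Sym2 V | e ∈ T.G.edgeSet ∧ 2 ≤ splitSizeE T e ∧ splitSizeE T e ≤ j}.ncard

/-- The split size sequence `s(τ)_i = min{j : m(τ)_j ≥ i}` (the left inverse of `m(τ)`). -/
noncomputable def sseq (T : PhyloTree n V) (i : ℕ) : ℕ :=
  sInf {j | i ≤ mseq T j}

def IsLeaf (T : PhyloTree n V) (v : V) : Prop := (T.G.neighborSet v).ncard = 1

/-- A binary (fully resolved) tree: every vertex has degree 1 or 3. -/
def IsBinary (T : PhyloTree n V) : Prop :=
  ∀ v : V, (T.G.neighborSet v).ncard = 1 ∨ (T.G.neighborSet v).ncard = 3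

/-- A caterpillar: a binary tree in which every inner vertex is adjacent to a leaf
(equivalently, the inner vertices form a path / there are exactly two cherries). -/
def IsCaterpillar (T : PhyloTree n V) : Prop :=
  IsBinary T ∧ ∀ v : V, ¬ IsLeaf T v → ∃ w : V, T.G.Adj v w ∧ IsLeaf T w

/-- A single NNI move across the inner edge `{u,v}`: the subtrees hanging at `a`
(on the `u` side) and at `b` (on the `v` side) are swapped. -/
def NNIMove (T T' : PhyloTree n V) : Prop :=
  ∃ u v a b : V, T.G.Adj u v ∧ ¬ IsLeaf T u ∧ ¬ IsLeaf T v ∧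
    T.G.Adj u a ∧ T.G.Adj v b ∧ a ≠ v ∧ b ≠ u ∧
    T'.leaf = T.leaf ∧
    T'.G.edgeSet = (T.G.edgeSet \ {s(u, a), s(v, b)}) ∪ {s(u, b), s(v, a)}

/-- The number of cherries = number of non-trivial splits of size exactly 2. -/
noncomputable def numCherries (T : PhyloTree n V) : ℕ :=
  {e : Sym2 V | e ∈ T.G.edgeSet ∧ splitSizeE T e = 2}.ncard

/-!
An NNI move across the inner edge `uv` exchanges the subtree hanging at `a` (next to `u`) with the
one hanging at `b` (next to `v`). Every edge other than `uv` keeps its split: the edges inside the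
four subtrees trivially, and the pendant edges `ua ↦ va`, `vb ↦ ub` because they travel with their
subtrees. So `Φ_f` changes only in the term of `uv`, whose split size goes from
`min(x₁ + x₂, x₃ + x₄)` to `min(x₁ + x₄, x₂ + x₃)`; the quartet inequality says this does not
decrease, and on the range `[2, n/2]` of split sizes `f` is nonnegative and increasing.
-/

namespace SimpleGraph

variable {V : Type*}

section Reachable

variable {G H : SimpleGraph V}

theorem Reachable.of_forall_adj {w x : V}
    (h : ∀ y z, G.Reachable y x → G.Adj y z → H.Adj y z) (hw : G.Reachable w x) :
    H.Reachable w x := by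
  obtain ⟨p⟩ := hw
  induction p with
  | nil => rfl
  | cons hadj p ih => exact (h _ _ ⟨.cons hadj p⟩ hadj).reachable.trans (ih h)

theorem reachable_iff_of_forall_adj_iff {w x : V}
    (h : ∀ y z, G.Reachable y x → (G.Adj y z ↔ H.Adj y z)) :
    H.Reachable w x ↔ G.Reachable w x := by
  refine ⟨?_, .of_forall_adj fun y z hy ↦ (h y z hy).mp⟩
  rintro ⟨p⟩
  induction p with
  | nil => rfl
  | cons hadj p ih =>
    have hx := ih h
    exact ((h _ _ hx).mpr hadj.symm).symm.reachable.trans hx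

theorem reachable_deleteEdges_or {w x y : V} (hw : G.Reachable w x) :
    (G.deleteEdges {s(x, y)}).Reachable w x ∨ (G.deleteEdges {s(x, y)}).Reachable w y := by
  obtain ⟨p⟩ := hw
  induction p with
  | nil => exact .inl .rfl
  | @cons w' z t hadj p ih =>
    by_cases he : s(w', z) = s(t, y)
    · rcases Sym2.eq_iff.mp he with ⟨h, -⟩ | ⟨h, -⟩ <;> rw [h]
      exacts [.inl .rfl, .inr .rfl]
    · have hadj' : (G.deleteEdges {s(t, y)}).Adj w' z := by simp [hadj, he]
      exact ih.imp hadj'.reachable.trans hadj'.reachable.trans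

theorem reachable_deleteEdges_iff_not_reachable (hG : G.Preconnected) {w x y : V}
    (hxy : ¬(G.deleteEdges {s(x, y)}).Reachable x y) :
    (G.deleteEdges {s(x, y)}).Reachable w y ↔ ¬(G.deleteEdges {s(x, y)}).Reachable w x :=
  ⟨fun hy hx ↦ hxy (hx.symm.trans hy), (reachable_deleteEdges_or (hG w x)).resolve_left⟩

theorem IsAcyclic.not_reachable_deleteEdges (hG : G.IsAcyclic) {x y : V} (h : G.Adj x y) :
    ¬(G.deleteEdges {s(x, y)}).Reachable x y :=
  isAcyclic_iff_forall_adj_isBridge.mp hG h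

theorem IsAcyclic.reachable_deleteEdges_iff (hG : G.IsAcyclic) {u v w : V} (huv : G.Adj u v) :
    (G.deleteEdges {s(u, v)}).Reachable w u ↔
      w = u ∨ ∃ c, G.Adj u c ∧ c ≠ v ∧ (G.deleteEdges {s(u, c)}).Reachable w c := by
  constructor
  · suffices ∀ t, (G.deleteEdges {s(u, v)}).Walk w t → t = u →
        w = u ∨ ∃ c, G.Adj u c ∧ c ≠ v ∧ (G.deleteEdges {s(u, c)}).Reachable w c from
      fun ⟨p⟩ ↦ this u p rfl
    intro t q ht
    induction q with
    | nil => exact .inl ht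
    | @cons w' z t hadj' q ih =>
      obtain ⟨hadj, he⟩ := deleteEdges_adj.mp hadj'
      rcases ih ht with rfl | ⟨c, huc, hcv, hzc⟩
      · refine .inr ⟨w', hadj.symm, fun h ↦ he ?_, .rfl⟩
        simp [h, Sym2.eq_swap]
      by_cases hw : s(w', z) = s(u, c)
      · rcases Sym2.eq_iff.mp hw with ⟨h, -⟩ | ⟨-, rfl⟩
        · exact .inl h
        · exact absurd hzc (hG.not_reachable_deleteEdges huc)
      · exact .inr ⟨c, huc, hcv, (deleteEdges_adj.mpr ⟨hadj, hw⟩).reachable.trans hzc⟩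
  · rintro (rfl | ⟨c, huc, hcv, hwc⟩)
    · rfl
    have hu := hG.not_reachable_deleteEdges huc
    refine Reachable.trans (hwc.of_forall_adj fun y z hy hyz ↦ ?_) (Adj.reachable ?_)
    · refine deleteEdges_adj.mpr ⟨(deleteEdges_adj.mp hyz).1, fun h ↦ ?_⟩
      rcases Sym2.eq_iff.mp h with ⟨rfl, -⟩ | ⟨-, rfl⟩
      · exact hu hy
      · exact hu (hyz.symm.reachable.trans hy)
    · simp [huc.symm, hcv, huc.ne']

end Reachable

/-- The graph part of an NNI move across the edge `uv`: `G'` is `G` with the subtree hanging at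
`a` (a neighbour of `u`) and the one hanging at `b` (a neighbour of `v`) exchanged. -/
structure IsNNISwap (G G' : SimpleGraph V) (u v a b : V) : Prop where
  adj_uv : G.Adj u v
  adj_ua : G.Adj u a
  adj_vb : G.Adj v b
  ne_av : a ≠ v
  ne_bu : b ≠ u
  edgeSet_eq : G'.edgeSet = (G.edgeSet \ {s(u, a), s(v, b)}) ∪ {s(u, b), s(v, a)}

/-- Matches the edges of `G` with those of `G'` when `IsNNISwap G G' u v a b`:
`ua ↦ va`, `vb ↦ ub`, every other edge is kept. -/
def nniEdgePerm [DecidableEq V] (u v a b : V) : Equiv.Perm (Sym2 V) :=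
  Equiv.swap s(u, a) s(v, a) * Equiv.swap s(v, b) s(u, b)

namespace IsNNISwap

variable {G G' : SimpleGraph V} {u v a b : V}

theorem symm (h : IsNNISwap G G' u v a b) : IsNNISwap G G' v u b a where
  adj_uv := h.adj_uv.symm
  adj_ua := h.adj_vb
  adj_vb := h.adj_ua
  ne_av := h.ne_bu
  ne_bu := h.ne_av
  edgeSet_eq := by rw [h.edgeSet_eq, Set.pair_comm, Set.pair_comm s(u, b)]

theorem adj_iff (h : IsNNISwap G G' u v a b) {p q : V} : G'.Adj p q ↔
    (G.Adj p q ∧ s(p, q) ≠ s(u, a) ∧ s(p, q) ≠ s(v, b)) ∨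
      s(p, q) = s(u, b) ∨ s(p, q) = s(v, a) := by
  rw [← mem_edgeSet, h.edgeSet_eq]
  simp only [Set.mem_union, Set.mem_sdiff, Set.mem_insert_iff, Set.mem_singleton_iff, mem_edgeSet,
    not_or]

theorem adj_left_iff (h : IsNNISwap G G' u v a b) {w : V} :
    G'.Adj u w ↔ (G.Adj u w ∧ w ≠ a) ∨ w = b := by
  have := h.adj_uv.ne
  have := h.adj_ua.ne
  have := h.ne_bu
  rw [h.adj_iff]
  simp only [Sym2.eq_iff]
  grind

theorem adj_iff_of_ne (h : IsNNISwap G G' u v a b) {w z : V} (hu : w ≠ u) (hv : w ≠ v)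
    (ha : w ≠ a) (hb : w ≠ b) : G'.Adj w z ↔ G.Adj w z := by
  simp [h.adj_iff, hu, hv, ha, hb]

theorem not_adj_ub (h : IsNNISwap G G' u v a b) (hG : G.IsAcyclic) : ¬G.Adj u b := by
  classical
  intro hub
  exact hG.cliqueFree le_rfl {u, v, b} (is3Clique_triple_iff.mpr ⟨h.adj_uv, hub, h.adj_vb⟩)

theorem ne_ab (h : IsNNISwap G G' u v a b) (hG : G.IsAcyclic) : a ≠ b := by
  rintro rfl
  exact h.not_adj_ub hG h.adj_ua

theorem reachable_deleteEdges_iff_of_not_reachable (h : IsNNISwap G G' u v a b) {p q w : V}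
    (huv : s(p, q) ≠ s(u, v)) (hua : s(p, q) ≠ s(u, a)) (hvb : s(p, q) ≠ s(v, b))
    (hu : ¬(G.deleteEdges {s(p, q)}).Reachable u p) :
    (G'.deleteEdges {s(p, q)}).Reachable w p ↔ (G.deleteEdges {s(p, q)}).Reachable w p := by
  have adj {x y : V} (hxy : G.Adj x y) (hne : s(p, q) ≠ s(x, y)) :
      (G.deleteEdges {s(p, q)}).Reachable x y :=
    (deleteEdges_adj.mpr ⟨hxy, hne.symm⟩).reachable
  refine reachable_iff_of_forall_adj_iff fun y z hy ↦ ?_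
  have hyu : y ≠ u := by rintro rfl; exact hu hy
  have hyv : y ≠ v := by rintro rfl; exact hu ((adj h.adj_uv huv).trans hy)
  have hya : y ≠ a := by rintro rfl; exact hu ((adj h.adj_ua hua).trans hy)
  have hyb : y ≠ b := by
    rintro rfl; exact hu ((adj h.adj_uv huv).trans ((adj h.adj_vb hvb).trans hy))
  simp only [deleteEdges_adj, h.adj_iff_of_ne hyu hyv hya hyb]

theorem reachable_deleteEdges_iff_left (h : IsNNISwap G G' u v a b) (hG : G.IsAcyclic) {w : V} :
    (G'.deleteEdges {s(a, v)}).Reachable w a ↔ (G.deleteEdges {s(a, u)}).Reachable w a := by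
  have hau := h.adj_ua.ne'
  have hab := h.ne_ab hG
  have hva : ¬G.Adj a v := fun hav ↦ h.symm.not_adj_ub hG hav.symm
  have huv : (G.deleteEdges {s(a, u)}).Adj u v :=
    deleteEdges_adj.mpr ⟨h.adj_uv, by simp [h.ne_av.symm, hau.symm]⟩
  have hvb : (G.deleteEdges {s(a, u)}).Adj v b :=
    deleteEdges_adj.mpr ⟨h.adj_vb, by simp [hab.symm, h.ne_av.symm]⟩
  have hu : ¬(G.deleteEdges {s(a, u)}).Reachable u a :=
    fun hua ↦ hG.not_reachable_deleteEdges h.adj_ua.symm hua.symm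
  refine reachable_iff_of_forall_adj_iff fun y z hy ↦ ?_
  have hyu : y ≠ u := by rintro rfl; exact hu hy
  have hyv : y ≠ v := by rintro rfl; exact hu (huv.reachable.trans hy)
  have hyb : y ≠ b := by rintro rfl; exact hu (huv.reachable.trans (hvb.reachable.trans hy))
  by_cases hya : y = a
  · -- at `a` the edge `au` is replaced by `av`, and each side deletes its own one
    subst hya
    simp only [deleteEdges_adj, h.adj_iff]
    grind
  · simp [deleteEdges_adj, h.adj_iff_of_ne hyu hyv hya hyb, hyu, hyv, hya]

variable [DecidableEq V]

theorem nniEdgePerm_ua (h : IsNNISwap G G' u v a b) (hG : G.IsAcyclic) :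
    nniEdgePerm u v a b s(u, a) = s(v, a) := by
  have := h.adj_uv.ne; have := h.adj_ua.ne; have := h.ne_ab hG; have := h.ne_bu.symm
  rw [nniEdgePerm, Equiv.Perm.mul_apply, Equiv.swap_apply_of_ne_of_ne (x := s(u, a)),
    Equiv.swap_apply_left] <;> simp [*]

theorem nniEdgePerm_vb (h : IsNNISwap G G' u v a b) (hG : G.IsAcyclic) :
    nniEdgePerm u v a b s(v, b) = s(u, b) := by
  have := h.adj_uv.ne; have := h.adj_ua.ne; have := (h.ne_ab hG).symm; have := h.ne_bu.symm
  rw [nniEdgePerm, Equiv.Perm.mul_apply, Equiv.swap_apply_left,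
    Equiv.swap_apply_of_ne_of_ne] <;> simp [*]

theorem nniEdgePerm_of_mem (h : IsNNISwap G G' u v a b) (hG : G.IsAcyclic) {e : Sym2 V}
    (he : e ∈ G.edgeSet) (hua : e ≠ s(u, a)) (hvb : e ≠ s(v, b)) : nniEdgePerm u v a b e = e := by
  have hub : e ≠ s(u, b) := by rintro rfl; exact h.not_adj_ub hG he
  have hva : e ≠ s(v, a) := by rintro rfl; exact h.symm.not_adj_ub hG he
  rw [nniEdgePerm, Equiv.Perm.mul_apply, Equiv.swap_apply_of_ne_of_ne hvb hub,
    Equiv.swap_apply_of_ne_of_ne hua hva]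

theorem bijOn_nniEdgePerm (h : IsNNISwap G G' u v a b) (hG : G.IsAcyclic) :
    Set.BijOn (nniEdgePerm u v a b) G.edgeSet G'.edgeSet := by
  convert (nniEdgePerm u v a b).injective.injOn.bijOn_image (s := G.edgeSet)
  symm
  have hsub : {s(u, a), s(v, b)} ⊆ G.edgeSet := by
    simp [Set.insert_subset_iff, h.adj_ua, h.adj_vb]
  rw [← Set.sdiff_union_of_subset hsub, Set.image_union, Set.image_pair, h.nniEdgePerm_ua hG,
    h.nniEdgePerm_vb hG, h.edgeSet_eq, Set.pair_comm s(u, b)]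
  congr 1
  refine (Set.image_congr fun e he ↦ ?_).trans (Set.image_id _)
  simp only [Set.mem_sdiff, Set.mem_insert_iff, Set.mem_singleton_iff, not_or] at he
  exact h.nniEdgePerm_of_mem hG he.1 he.2.1 he.2.2

end IsNNISwap

end SimpleGraph

theorem Set.exists_eq_triple_of_ncard_eq_three {α : Type*} {s : Set α} {x y : α}
    (hs : s.ncard = 3) (hx : x ∈ s) (hy : y ∈ s) (hxy : x ≠ y) :
    ∃ z, z ≠ x ∧ z ≠ y ∧ s = {x, y, z} := by
  have hpair : {x, y} ⊆ s := Set.insert_subset_iff.mpr ⟨hx, Set.singleton_subset_iff.mpr hy⟩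
  obtain ⟨z, hz⟩ := Set.ncard_eq_one.mp <| by
    rw [Set.ncard_sdiff hpair, hs, Set.ncard_pair hxy]
  have hzs : z ∈ s \ {x, y} := hz ▸ rfl
  simp only [Set.mem_sdiff, Set.mem_insert_iff, Set.mem_singleton_iff, not_or] at hzs
  refine ⟨z, hzs.2.1, hzs.2.2, Set.Subset.antisymm (fun t ht ↦ ?_) ?_⟩
  · by_cases hmem : t ∈ ({x, y} : Set α)
    · exact Or.elim hmem .inl (.inr ∘ .inl)
    · have ht' : t ∈ s \ {x, y} := ⟨ht, hmem⟩
      rw [hz] at ht'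
      exact .inr (.inr ht')
  · simp [Set.insert_subset_iff, hx, hy, hzs.1]

open SimpleGraph

section splitSide

variable {n : ℕ} {V : Type} {G G' : SimpleGraph V}

theorem splitSide_congr (leaf : Fin n → V) {x y x' y' : V}
    (h : ∀ w, (G'.deleteEdges {s(x', y')}).Reachable w x' ↔
      (G.deleteEdges {s(x, y)}).Reachable w x) :
    splitSide G' leaf x' y' = splitSide G leaf x y := by
  simp only [splitSide, h]

theorem splitSide_add_splitSide (hG : G.Preconnected) (leaf : Fin n → V) {x y : V}
    (hxy : ¬(G.deleteEdges {s(x, y)}).Reachable x y) :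
    splitSide G leaf x y + splitSide G leaf y x = n := by
  have hcompl : {i | (G.deleteEdges {s(x, y)}).Reachable (leaf i) y} =
      {i | (G.deleteEdges {s(x, y)}).Reachable (leaf i) x}ᶜ := by
    ext i
    exact reachable_deleteEdges_iff_not_reachable hG hxy
  unfold splitSide
  rw [Sym2.eq_swap (a := y), hcompl, Set.ncard_add_ncard_compl, Nat.card_eq_fintype_card,
    Fintype.card_fin]

theorem SimpleGraph.IsAcyclic.splitSide_eq_add (hG : G.IsAcyclic) (leaf : Fin n → V)
    {u v c d : V} (hN : G.neighborSet u = {v, c, d}) (hcv : c ≠ v) (hdv : d ≠ v) (hcd : c ≠ d)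
    (hleaf : ∀ i, leaf i ≠ u) :
    splitSide G leaf u v = splitSide G leaf c u + splitSide G leaf d u := by
  have hadj (w : V) : G.Adj u w ↔ w = v ∨ w = c ∨ w = d := by
    rw [← mem_neighborSet, hN]; rfl
  have huc : G.Adj u c := (hadj c).mpr (.inr (.inl rfl))
  have hud : G.Adj u d := (hadj d).mpr (.inr (.inr rfl))
  have hunion : {i | (G.deleteEdges {s(u, v)}).Reachable (leaf i) u} =
      {i | (G.deleteEdges {s(u, c)}).Reachable (leaf i) c} ∪
        {i | (G.deleteEdges {s(u, d)}).Reachable (leaf i) d} := by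
    ext i
    simp only [Set.mem_ofPred_eq, Set.mem_union,
      hG.reachable_deleteEdges_iff ((hadj v).mpr (.inl rfl))]
    constructor
    · rintro (h | ⟨e, hue, hev, he⟩)
      · exact absurd h (hleaf i)
      · rcases (hadj e).mp hue with rfl | rfl | rfl
        exacts [absurd rfl hev, .inl he, .inr he]
    · rintro (h | h)
      exacts [.inr ⟨c, huc, hcv, h⟩, .inr ⟨d, hud, hdv, h⟩]
  have hdisj : Disjoint {i | (G.deleteEdges {s(u, c)}).Reachable (leaf i) c}
      {i | (G.deleteEdges {s(u, d)}).Reachable (leaf i) d} := by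
    refine Set.disjoint_left.mpr fun i hc hd ↦ hG.not_reachable_deleteEdges hud ?_
    exact ((hG.reachable_deleteEdges_iff hud).mpr (.inr ⟨c, huc, hcd, hc⟩)).symm.trans hd
  unfold splitSide
  rw [Sym2.eq_swap (a := c), Sym2.eq_swap (a := d), hunion,
    Set.ncard_union_eq hdisj (Set.toFinite _) (Set.toFinite _)]

namespace SimpleGraph.IsNNISwap

variable {u v a b : V}

theorem splitSide_left (h : IsNNISwap G G' u v a b) (hG : G.IsAcyclic) (leaf : Fin n → V) :
    splitSide G' leaf a v = splitSide G leaf a u :=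
  splitSide_congr leaf fun _ ↦ h.reachable_deleteEdges_iff_left hG

theorem splitSide_of_not_reachable (h : IsNNISwap G G' u v a b) (leaf : Fin n → V) {p q : V}
    (huv : s(p, q) ≠ s(u, v)) (hua : s(p, q) ≠ s(u, a)) (hvb : s(p, q) ≠ s(v, b))
    (hu : ¬(G.deleteEdges {s(p, q)}).Reachable u p) :
    splitSide G' leaf p q = splitSide G leaf p q :=
  splitSide_congr leaf fun _ ↦ h.reachable_deleteEdges_iff_of_not_reachable huv hua hvb hu

theorem splitSide_center (h : IsNNISwap G G' u v a b) (hG : G.IsAcyclic) (hG' : G'.IsAcyclic)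
    (leaf : Fin n → V) {c : V} (hN : G.neighborSet u = {v, a, c}) (hcv : c ≠ v) (hca : c ≠ a)
    (hleaf : ∀ i, leaf i ≠ u) :
    splitSide G' leaf u v = splitSide G leaf c u + splitSide G leaf b v := by
  have hN' : G'.neighborSet u = {v, c, b} := by
    ext w
    simp only [mem_neighborSet, h.adj_left_iff, ← mem_neighborSet G, hN]
    have := h.ne_av
    grind
  have huc : G.Adj u c := by rw [← mem_neighborSet, hN]; simp
  have hcb : c ≠ b := by rintro rfl; exact h.not_adj_ub hG huc
  rw [hG'.splitSide_eq_add leaf hN' hcv h.adj_vb.ne' hcb hleaf, h.symm.splitSide_left hG,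
    h.splitSide_of_not_reachable leaf (by simp [hcv, huc.ne'])
      (by simp [hca, huc.ne']) (by simp [hcv, hcb])
      fun hu ↦ hG.not_reachable_deleteEdges huc.symm hu.symm]

end SimpleGraph.IsNNISwap

end splitSide

namespace PhyloTree

variable {n : ℕ} {V : Type} [Fintype V]

theorem splitSide_add_splitSide (T : PhyloTree n V) {x y : V} (h : T.G.Adj x y) :
    splitSide T.G T.leaf x y + splitSide T.G T.leaf y x = n :=
  _root_.splitSide_add_splitSide T.isTree.connected.preconnected T.leaf
    (T.isTree.isAcyclic.not_reachable_deleteEdges h)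

theorem splitSizeE_mk (T : PhyloTree n V) (x y : V) :
    splitSizeE T s(x, y) = min (splitSide T.G T.leaf x y) (splitSide T.G T.leaf y x) :=
  rfl

theorem splitSizeE_le_half (T : PhyloTree n V) {e : Sym2 V} (he : e ∈ T.G.edgeSet) :
    splitSizeE T e ≤ n / 2 := by
  induction e using Sym2.ind with
  | _ x y =>
    have := T.splitSide_add_splitSide (x := x) (y := y) he
    rw [splitSizeE_mk]
    omega

theorem splitSizeE_eq_of_splitSide_eq {T T' : PhyloTree n V} {x y x' y' : V}
    (h : T.G.Adj x y) (h' : T'.G.Adj x' y')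
    (hs : splitSide T'.G T'.leaf x' y' = splitSide T.G T.leaf x y) :
    splitSizeE T' s(x', y') = splitSizeE T s(x, y) := by
  have := T.splitSide_add_splitSide h
  have := T'.splitSide_add_splitSide h'
  rw [splitSizeE_mk, splitSizeE_mk]
  omega

end PhyloTree

section Phi

variable {n : ℕ} {V : Type} [Fintype V]

theorem Phi_eq_finsum (T : PhyloTree n V) (f : ℕ → ℝ) :
    Phi T f = ∑ᶠ e ∈ T.G.edgeSet, if 2 ≤ splitSizeE T e then f (splitSizeE T e) else 0 := by
  rw [Phi, finsum_mem_def, finsum_mem_def]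
  refine finsum_congr fun e ↦ ?_
  by_cases he : e ∈ T.G.edgeSet <;> by_cases h2 : 2 ≤ splitSizeE T e <;>
    simp [Set.indicator, he, h2]

theorem Phi_le_Phi_of_bijOn {T T' : PhyloTree n V} {f : ℕ → ℝ}
    (hf0 : ∀ k, 2 ≤ k → k ≤ n / 2 → 0 ≤ f k)
    (hf : ∀ a b, 2 ≤ a → a < b → b ≤ n / 2 → f a < f b)
    {σ : Sym2 V → Sym2 V} (hσ : Set.BijOn σ T.G.edgeSet T'.G.edgeSet)
    (hle : ∀ e ∈ T.G.edgeSet, splitSizeE T e ≤ splitSizeE T' (σ e)) :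
    Phi T f ≤ Phi T' f := by
  have hmono (j k : ℕ) (hjk : j ≤ k) (hk : k ≤ n / 2) :
      (if 2 ≤ j then f j else 0) ≤ if 2 ≤ k then f k else 0 := by
    by_cases hj : 2 ≤ j
    · rw [if_pos hj, if_pos (hj.trans hjk)]
      rcases hjk.lt_or_eq with hlt | rfl
      exacts [(hf j k hj hlt hk).le, le_rfl]
    · rw [if_neg hj]
      split_ifs with hk2
      exacts [hf0 k hk2 hk, le_rfl]
  have hfin := T.G.edgeSet.toFinite
  rw [Phi_eq_finsum, Phi_eq_finsum, ← finsum_mem_eq_of_bijOn σ hσ fun _ _ ↦ rfl,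
    finsum_mem_eq_finite_toFinset_sum _ hfin, finsum_mem_eq_finite_toFinset_sum _ hfin]
  refine Finset.sum_le_sum fun e he ↦ ?_
  rw [Set.Finite.mem_toFinset] at he
  exact hmono _ _ (hle e he) (T'.splitSizeE_le_half (hσ.mapsTo he))

end Phi

namespace SimpleGraph.IsNNISwap

open PhyloTree

variable {n : ℕ} {V : Type} [Fintype V] {T T' : PhyloTree n V} {u v a b : V}

theorem splitSizeE_nniEdgePerm [DecidableEq V] (h : IsNNISwap T.G T'.G u v a b)
    (hleaf : T'.leaf = T.leaf) {e : Sym2 V} (he : e ∈ T.G.edgeSet) (hne : e ≠ s(u, v)) :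
    splitSizeE T' (nniEdgePerm u v a b e) = splitSizeE T e := by
  have hG := T.isTree.isAcyclic
  by_cases hua : e = s(u, a)
  · rw [hua, h.nniEdgePerm_ua hG, Sym2.eq_swap, Sym2.eq_swap (a := u)]
    refine splitSizeE_eq_of_splitSide_eq h.adj_ua.symm (h.adj_iff.mpr (.inr (.inr Sym2.eq_swap))) ?_
    rw [hleaf]
    exact h.splitSide_left hG T.leaf
  by_cases hvb : e = s(v, b)
  · rw [hvb, h.nniEdgePerm_vb hG, Sym2.eq_swap, Sym2.eq_swap (a := v)]
    refine splitSizeE_eq_of_splitSide_eq h.adj_vb.symm (h.adj_iff.mpr (.inr (.inl Sym2.eq_swap))) ?_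
    rw [hleaf]
    exact h.symm.splitSide_left hG T.leaf
  rw [h.nniEdgePerm_of_mem hG he hua hvb]
  have hside (p q : V) (hpq : T.G.Adj p q) (hpq' : s(p, q) = e)
      (hu : ¬(T.G.deleteEdges {s(p, q)}).Reachable u p) : splitSizeE T' e = splitSizeE T e := by
    subst hpq'
    refine splitSizeE_eq_of_splitSide_eq hpq (h.adj_iff.mpr (.inl ⟨hpq, hua, hvb⟩)) ?_
    rw [hleaf]
    exact h.splitSide_of_not_reachable T.leaf hne hua hvb hu
  induction e using Sym2.ind with
  | _ p q =>
    by_cases hu : (T.G.deleteEdges {s(p, q)}).Reachable u p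
    · refine hside q p he.symm Sym2.eq_swap fun hq ↦ hG.not_reachable_deleteEdges he ?_
      rw [Sym2.eq_swap] at hq
      exact hu.symm.trans hq
    · exact hside p q he rfl hu

theorem splitSizeE_center_le (h : IsNNISwap T.G T'.G u v a b) (hleaf : T'.leaf = T.leaf)
    (hu : ¬IsLeaf T u) (hv : ¬IsLeaf T v) {c d : V} (hNu : T.G.neighborSet u = {v, a, c})
    (hNv : T.G.neighborSet v = {u, b, d}) (hcv : c ≠ v) (hca : c ≠ a) (hdu : d ≠ u) (hdb : d ≠ b)
    (hq : min (splitSide T.G T.leaf a u + splitSide T.G T.leaf c u)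
        (splitSide T.G T.leaf b v + splitSide T.G T.leaf d v) ≤
      min (splitSide T.G T.leaf a u + splitSide T.G T.leaf d v)
        (splitSide T.G T.leaf c u + splitSide T.G T.leaf b v)) :
    splitSizeE T s(u, v) ≤ splitSizeE T' s(u, v) := by
  have hG := T.isTree.isAcyclic
  have hleafu (i) : T.leaf i ≠ u := fun hi ↦ hu ((T.leaf_iff u).mpr ⟨i, hi⟩)
  have hleafv (i) : T.leaf i ≠ v := fun hi ↦ hv ((T.leaf_iff v).mpr ⟨i, hi⟩)
  have hsu := hG.splitSide_eq_add T.leaf hNu h.ne_av hcv hca.symm hleafu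
  have hsv := hG.splitSide_eq_add T.leaf hNv h.ne_bu hdu hdb.symm hleafv
  have hsu' := h.splitSide_center hG T'.isTree.isAcyclic T.leaf hNu hcv hca hleafu
  have hn := T.splitSide_add_splitSide h.adj_uv
  have hn' := T'.splitSide_add_splitSide (h.adj_left_iff.mpr (.inl ⟨h.adj_uv, h.ne_av.symm⟩))
  rw [hleaf] at hn'
  rw [splitSizeE_mk, splitSizeE_mk, hleaf]
  omega

end SimpleGraph.IsNNISwap

/-- Converse: if every inner edge of `τ` satisfies the quartet inequality
`min(x₁+x₂, x₃+x₄) ≤ min{min(x₁+x₃, x₂+x₄), min(x₁+x₄, x₂+x₃)}`, then `τ` is an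
NNI-local minimum of `Φ_f` for every strictly increasing `f`. -/
theorem stmt_13 {n : ℕ} {V : Type} [Fintype V]
    (T : PhyloTree n V) (hbin : IsBinary T)
    (hineq : ∀ u v a1 a2 b1 b2 : V,
      T.G.Adj u v → ¬ IsLeaf T u → ¬ IsLeaf T v →
      T.G.Adj u a1 → T.G.Adj u a2 → a1 ≠ a2 → a1 ≠ v → a2 ≠ v →
      T.G.Adj v b1 → T.G.Adj v b2 → b1 ≠ b2 → b1 ≠ u → b2 ≠ u →
      min (splitSide T.G T.leaf a1 u + splitSide T.G T.leaf a2 u)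
          (splitSide T.G T.leaf b1 v + splitSide T.G T.leaf b2 v) ≤
        min (min (splitSide T.G T.leaf a1 u + splitSide T.G T.leaf b1 v)
              (splitSide T.G T.leaf a2 u + splitSide T.G T.leaf b2 v))
            (min (splitSide T.G T.leaf a1 u + splitSide T.G T.leaf b2 v)
              (splitSide T.G T.leaf a2 u + splitSide T.G T.leaf b1 v))) :
    ∀ f : ℕ → ℝ, (∀ k, 2 ≤ k → k ≤ n / 2 → 0 ≤ f k) →
      (∀ a b, 2 ≤ a → a < b → b ≤ n / 2 → f a < f b) →
      ∀ T' : PhyloTree n V, NNIMove T T' → Phi T f ≤ Phi T' f := by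
  rintro f hf0 hf T' ⟨u, v, a, b, huv, hu, hv, hua, hvb, hav, hbu, hleaf, hE⟩
  classical
  have h : IsNNISwap T.G T'.G u v a b := ⟨huv, hua, hvb, hav, hbu, hE⟩
  have hG := T.isTree.isAcyclic
  obtain ⟨c, hcv, hca, hNu⟩ := Set.exists_eq_triple_of_ncard_eq_three
    ((hbin u).resolve_left hu) huv hua hav.symm
  obtain ⟨d, hdu, hdb, hNv⟩ := Set.exists_eq_triple_of_ncard_eq_three
    ((hbin v).resolve_left hv) huv.symm hvb hbu.symm
  have huc : T.G.Adj u c := by rw [← mem_neighborSet, hNu]; simp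
  have hvd : T.G.Adj v d := by rw [← mem_neighborSet, hNv]; simp
  refine Phi_le_Phi_of_bijOn hf0 hf (h.bijOn_nniEdgePerm hG) fun e he ↦ ?_
  by_cases hc : e = s(u, v)
  · subst hc
    rw [h.nniEdgePerm_of_mem hG he (by simp [hav.symm, huv.ne.symm]) (by simp [huv.ne, hbu.symm])]
    exact h.splitSizeE_center_le hleaf hu hv hNu hNv hcv hca hdu hdb
      ((hineq u v a c b d huv hu hv hua huc hca.symm hav hcv hvb hvd hdb.symm hbu hdu).trans
        (min_le_right _ _))
  · exact (h.splitSizeE_nniEdgePerm hleaf he hc).ge
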